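/- arXiv:1211.0337 — 7 statements merged into one kernel-verified Lean document; each statement's English description precedes it below -/
import Mathlib

section
/- Let β₁, …, β_N be distinct real numbers, c₁, …, c_N complex numbers, and E ⊆ ℝ a set of positive Lebesgue measure. If for every x ∈ E we have ∑_{k=1}^N c_k e^{2πi β_k x} = 0, then c₁ = c₂ = ⋯ = c_N = 0. -/
/-!
A trigonometric polynomial `x ↦ ∑ cₖ e^{2πi βₖ x}` is real-analytic, and a set of positive
Lebesgue measure has an accumulation point, so by the identity theorem a trigonometric polynomial
vanishing on such a set vanishes identically. The functions `x ↦ e^{2πi β x}` for distinct `β` are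
distinct characters of `(ℝ, +)`, hence linearly independent by Dedekind's lemma, so all the
coefficients vanish.
-/

open MeasureTheory Real

theorem AddChar.linearIndependent_coe (A L : Type*) [AddMonoid A] [CommRing L] [IsDomain L] :
    LinearIndependent L ((⇑) : AddChar A L → A → L) :=
  ((linearIndependent_monoidHom (Multiplicative A) L).comp _
    toMonoidHomEquiv.injective).map' (LinearEquiv.funCongrLeft L L Multiplicative.ofAdd).toLinearMap
    (LinearEquiv.ker _)

theorem AnalyticOnNhd.eq_zero_of_eqOn_zero_of_measure_pos {𝕜 E : Type*}
    [NontriviallyNormedField 𝕜] [ConnectedSpace 𝕜] [SecondCountableTopology 𝕜]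
    [MeasurableSpace 𝕜] [NormedAddCommGroup E] [NormedSpace 𝕜 E]
    {f : 𝕜 → E} (hf : AnalyticOnNhd 𝕜 f Set.univ) {μ : Measure 𝕜} [NullSingletonClass μ]
    {s : Set 𝕜} (hs : 0 < μ s) (hfs : Set.EqOn f 0 s) : f = 0 := by
  obtain ⟨x₀, hx₀⟩ := exists_accPt_of_nullSingletonClass hs
  rw [accPt_iff_frequently_nhdsNE] at hx₀
  exact hf.eq_of_frequently_eq analyticOnNhd_const (hx₀.mono fun _ hx => hfs hx)

theorem analyticOnNhd_sum_mul_cexp {ι : Type*} [Fintype ι] (c a : ι → ℂ) :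
    AnalyticOnNhd ℝ (fun x : ℝ => ∑ k, c k * Complex.exp (a k * x)) Set.univ := by
  intro x _
  refine Finset.analyticAt_fun_sum _ fun k _ => analyticAt_const.mul ?_
  exact (analyticAt_const.mul analyticAt_id).cexp.restrictScalars.comp
    (Complex.ofRealCLM.analyticAt x)

noncomputable def Complex.fourierChar : AddChar ℝ ℂ :=
  Circle.coeHom.compAddChar Real.fourierChar

theorem Complex.fourierChar_isPrimitive : Complex.fourierChar.IsPrimitive :=
  (AddChar.IsPrimitive.of_ne_one fourierChar_ne_one).compMulHom_of_isPrimitive Circle.coe_injective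

theorem Complex.fourierChar_mulShift_apply (β x : ℝ) :
    Complex.fourierChar.mulShift β x = Complex.exp (2 * π * Complex.I * β * x) := by
  change ((Real.fourierChar (β * x) : Circle) : ℂ) = _
  rw [Real.fourierChar_apply]
  congr 1
  push_cast
  ring

theorem linearIndependent_cexp_two_pi_I_mul {ι : Type*} {β : ι → ℝ}
    (hβ : Function.Injective β) :
    LinearIndependent ℂ fun k (x : ℝ) => Complex.exp (2 * π * Complex.I * β k * x) := by
  have hcoe : (fun k (x : ℝ) => Complex.exp (2 * π * Complex.I * β k * x)) =
      (⇑) ∘ Complex.fourierChar.mulShift ∘ β :=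
    funext₂ fun _ _ => (Complex.fourierChar_mulShift_apply _ _).symm
  rw [hcoe]
  exact (AddChar.linearIndependent_coe ℝ ℂ).comp _
    ((AddChar.to_mulShift_inj_of_isPrimitive Complex.fourierChar_isPrimitive).comp hβ)

theorem trig_poly_linear_independence (N : ℕ) (β : Fin N → ℝ)
    (hβ : Function.Injective β) (c : Fin N → ℂ) (E : Set ℝ)
    (hE : 0 < volume E)
    (h : ∀ x ∈ E, ∑ k, c k * Complex.exp (2 * π * Complex.I * (β k) * x) = 0) :
    ∀ k, c k = 0 := by
  have hzero : (fun x : ℝ => ∑ k, c k * Complex.exp (2 * π * Complex.I * β k * x)) = 0 :=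
    (analyticOnNhd_sum_mul_cexp c _).eq_zero_of_eqOn_zero_of_measure_pos hE h
  refine Fintype.linearIndependent_iff.mp (linearIndependent_cexp_two_pi_I_mul hβ) c ?_
  ext x
  simpa using congrFun hzero x
end

section
/- Let g ∈ L²(ℝ) and suppose that for every α > 0 the ratio-limit l_g(α) = lim_{x→∞} g(x+α)/g(x) exists and is finite. Then |l_g(α)| ≤ 1 for every α > 0. -/
/-!
If `‖l_g(α)‖ > c > 1`, then eventually `g ≠ 0` and `‖g (x + α)‖ ≥ c ‖g x‖`,
say for `x ≥ a`. With `B = ∫_{[a,∞)} ‖g‖²`, which is finite and positive,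
translating by `α` gives `c² B ≤ ∫_{[a+α,∞)} ‖g‖² ≤ B`, forcing `c ≤ 1`.
-/

open Filter MeasureTheory Set Topology

lemma setIntegral_Ici_comp_add_right {E : Type*} [NormedAddCommGroup E] [NormedSpace ℝ E]
    (f : ℝ → E) (a α : ℝ) :
    ∫ x in Ici a, f (x + α) = ∫ x in Ici (a + α), f x := by
  simpa using (measurePreserving_add_right volume α).setIntegral_preimage_emb
    (measurableEmbedding_addRight α) f (Ici (a + α))

lemma MeasureTheory.IntegrableOn.comp_add_right_Ici {E : Type*} [NormedAddCommGroup E]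
    {f : ℝ → E} {a α : ℝ} (hf : IntegrableOn f (Ici (a + α))) :
    IntegrableOn (fun x => f (x + α)) (Ici a) := by
  simpa [Function.comp_def] using
    (measurePreserving_add_right volume α).integrableOn_comp_preimage
      (measurableEmbedding_addRight α) |>.2 hf

lemma le_one_of_integrableOn_Ici_of_mul_le_comp_add {φ : ℝ → ℝ} {a α c : ℝ}
    (hα : 0 ≤ α) (hφ : IntegrableOn φ (Ici a)) (hpos : ∀ x ∈ Ici a, 0 < φ x)
    (hstep : ∀ x ∈ Ici a, c * φ x ≤ φ (x + α)) : c ≤ 1 := by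
  have hsub : Ici (a + α) ⊆ Ici a := Ici_subset_Ici.2 (le_add_of_nonneg_right hα)
  have hnonneg : 0 ≤ᵐ[volume.restrict (Ici a)] φ :=
    (ae_restrict_iff' measurableSet_Ici).2 (ae_of_all _ fun x hx => (hpos x hx).le)
  have hB : 0 < ∫ x in Ici a, φ x := by
    rw [setIntegral_pos_iff_support_of_nonneg_ae hnonneg hφ]
    calc (0 : ENNReal) < volume (Ici a) := by simp
      _ ≤ volume (Function.support φ ∩ Ici a) :=
          measure_mono fun x hx => ⟨(hpos x hx).ne', hx⟩
  refine le_of_mul_le_mul_right ?_ hB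
  calc c * ∫ x in Ici a, φ x = ∫ x in Ici a, c * φ x := (integral_const_mul c _).symm
    _ ≤ ∫ x in Ici a, φ (x + α) :=
        setIntegral_mono_on (hφ.const_mul c) (hφ.mono_set hsub).comp_add_right_Ici
          measurableSet_Ici hstep
    _ = ∫ x in Ici (a + α), φ x := setIntegral_Ici_comp_add_right φ a α
    _ ≤ ∫ x in Ici a, φ x := setIntegral_mono_set hφ hnonneg hsub.eventuallyLE
    _ = 1 * ∫ x in Ici a, φ x := (one_mul _).symm

lemma MeasureTheory.MemLp.le_one_of_eventually_mul_norm_le {E : Type*}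
    [NormedAddCommGroup E] {g : ℝ → E} {p : ENNReal} (hg : MemLp g p volume) (hp0 : p ≠ 0)
    (hp : p ≠ ⊤) {α c : ℝ} (hα : 0 ≤ α)
    (hgrowth : ∀ᶠ x in atTop, g x ≠ 0 ∧ c * ‖g x‖ ≤ ‖g (x + α)‖) : c ≤ 1 := by
  by_contra! hc
  have hp_pos : 0 < p.toReal := ENNReal.toReal_pos hp0 hp
  obtain ⟨a, ha⟩ := eventually_atTop.1 hgrowth
  refine (Real.one_lt_rpow hc hp_pos).not_ge <|
    le_one_of_integrableOn_Ici_of_mul_le_comp_add hα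
      (hg.integrable_norm_rpow hp0 hp).integrableOn
      (fun x hx => Real.rpow_pos_of_pos (norm_pos_iff.2 (ha x hx).1) _) fun x hx => ?_
  rw [← Real.mul_rpow (by linarith) (norm_nonneg _)]
  exact Real.rpow_le_rpow (by positivity) (ha x hx).2 hp_pos.le

lemma Filter.Tendsto.eventually_ne_zero_and_mul_norm_le {X 𝕜 : Type*} [NormedDivisionRing 𝕜]
    {l : Filter X} {u v : X → 𝕜} {L : 𝕜} {c : ℝ}
    (h : Tendsto (fun x => u x / v x) l (𝓝 L)) (hcL : c < ‖L‖) (hc : 0 ≤ c) :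
    ∀ᶠ x in l, v x ≠ 0 ∧ c * ‖v x‖ ≤ ‖u x‖ := by
  filter_upwards [h.norm.eventually (eventually_gt_nhds hcL)] with x hx
  have hv : v x ≠ 0 := by
    rintro hv
    rw [hv, div_zero, norm_zero] at hx
    linarith
  rw [norm_div, lt_div_iff₀ (norm_pos_iff.2 hv)] at hx
  exact ⟨hv, hx.le⟩

theorem ratio_limit_norm_le_one (g : ℝ → ℂ) (hg : MemLp g 2 volume)
    (l : ℝ → ℂ)
    (hl : ∀ α > 0, Tendsto (fun x => g (x + α) / g x) atTop (nhds (l α))) :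
    ∀ α > 0, ‖l α‖ ≤ 1 := by
  intro α hα
  by_contra! h
  obtain ⟨c, hc1, hcl⟩ := exists_between h
  have hgrowth := (hl α hα).eventually_ne_zero_and_mul_norm_le hcl (zero_le_one.trans hc1.le)
  exact hc1.not_ge <| hg.le_one_of_eventually_mul_norm_le two_ne_zero ENNReal.ofNat_ne_top hα.le
    hgrowth
end

section
/- Let g ∈ L²(ℝ) and suppose that for every α > 0 the ratio-limit l_g(α) exists and is finite. Then there exists a real number a with 0 ≤ a ≤ 1 such that |l_g(α)| = a^α for every α > 0. -/
/-!
If `g` vanishes at arbitrarily large `x`, every ratio-limit is `0`. Otherwise the ratios telescope,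
`g (x + α + β) / g x = g (x + α + β) / g (x + α) * (g (x + α) / g x)`, so `α ↦ ‖l α‖` is
multiplicative on `(0, ∞)`. It is also at most `1`: were `‖l α‖ > 1`, the mass of `|g|²` on
consecutive intervals of length `α` would grow geometrically, against `g ∈ L²`. A multiplicative
function with values in `[0, 1]` is `a ^ α`: its logarithm is additive and nonpositive, hence
antitone, and an antitone additive function deviates from `α * f 1` by a bounded amount that scales
linearly under `α ↦ n α`, so the deviation vanishes.
-/

open Filter MeasureTheory

section PositiveHalfLine

variable {f : ℝ → ℝ}

theorem map_nat_succ_mul_of_map_add (hadd : ∀ x > 0, ∀ y > 0, f (x + y) = f x + f y)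
    (n : ℕ) {x : ℝ} (hx : 0 < x) : f ((n + 1) * x) = (n + 1) * f x := by
  induction n with
  | zero => simp
  | succ n ih =>
    push_cast
    rw [add_one_mul ((n : ℝ) + 1), hadd _ (by positivity) _ hx, ih]
    ring

theorem antitoneOn_of_map_add_of_nonpos (hadd : ∀ x > 0, ∀ y > 0, f (x + y) = f x + f y)
    (hnp : ∀ x > 0, f x ≤ 0) : AntitoneOn f (Set.Ioi 0) := by
  intro x hx y _ hxy
  rcases hxy.eq_or_lt with rfl | hlt
  · rfl
  · have := hadd x hx (y - x) (sub_pos.mpr hlt)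
    rw [add_sub_cancel] at this
    linarith [hnp (y - x) (sub_pos.mpr hlt)]

/-- Both `f y` and `y * f 1` lie between `(⌊y⌋₊ + 1) * f 1` and `⌊y⌋₊ * f 1`. -/
theorem abs_sub_mul_le_of_map_add_of_nonpos (hadd : ∀ x > 0, ∀ y > 0, f (x + y) = f x + f y)
    (hnp : ∀ x > 0, f x ≤ 0) {y : ℝ} (hy : 0 < y) : |f y - y * f 1| ≤ -f 1 := by
  have hanti := antitoneOn_of_map_add_of_nonpos hadd hnp
  have hf1 := hnp 1 one_pos
  have hnat (n : ℕ) : f ((n : ℝ) + 1) = ((n : ℝ) + 1) * f 1 := by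
    simpa using map_nat_succ_mul_of_map_add hadd n one_pos
  have hlo : y < ⌊y⌋₊ + 1 := Nat.lt_floor_add_one y
  have hup : (⌊y⌋₊ : ℝ) ≤ y := Nat.floor_le hy.le
  have hlower : (⌊y⌋₊ + 1) * f 1 ≤ f y := by
    rw [← hnat]; exact hanti hy (by positivity : (0 : ℝ) < ⌊y⌋₊ + 1) hlo.le
  have hupper : f y ≤ ⌊y⌋₊ * f 1 := by
    rcases Nat.eq_zero_or_eq_succ_pred ⌊y⌋₊ with h0 | hs
    · simpa [h0] using hnp y hy
    · rw [hs] at hup ⊢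
      push_cast at hup ⊢
      rw [← hnat]; exact hanti (Set.mem_Ioi.mpr (Nat.cast_add_one_pos _)) hy hup
  rw [abs_le]
  constructor <;> nlinarith

theorem eq_mul_of_map_add_of_nonpos (hadd : ∀ x > 0, ∀ y > 0, f (x + y) = f x + f y)
    (hnp : ∀ x > 0, f x ≤ 0) {x : ℝ} (hx : 0 < x) : f x = x * f 1 := by
  have hbound (n : ℕ) : ((n : ℝ) + 1) * |f x - x * f 1| ≤ -f 1 := by
    have := abs_sub_mul_le_of_map_add_of_nonpos hadd hnp (by positivity : 0 < ((n : ℝ) + 1) * x)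
    rwa [map_nat_succ_mul_of_map_add hadd n hx, mul_assoc, ← mul_sub, abs_mul,
      abs_of_pos (by positivity : (0 : ℝ) < n + 1)] at this
  by_contra hne
  have hpos : 0 < |f x - x * f 1| := abs_pos.mpr (sub_ne_zero.mpr hne)
  obtain ⟨n, hn⟩ := exists_nat_gt (-f 1 / |f x - x * f 1|)
  rw [div_lt_iff₀ hpos] at hn
  nlinarith [hbound n]

variable {h : ℝ → ℝ}

theorem map_nat_succ_mul_of_map_add_eq_mul (hmul : ∀ x > 0, ∀ y > 0, h (x + y) = h x * h y)
    (n : ℕ) {x : ℝ} (hx : 0 < x) : h ((n + 1) * x) = h x ^ (n + 1) := by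
  induction n with
  | zero => simp
  | succ n ih =>
    push_cast
    rw [add_one_mul ((n : ℝ) + 1), hmul _ (by positivity) _ hx, ih, ← pow_succ]

theorem eq_zero_of_map_add_eq_mul_of_eq_zero (hmul : ∀ x > 0, ∀ y > 0, h (x + y) = h x * h y)
    {x₀ : ℝ} (hx₀ : 0 < x₀) (h0 : h x₀ = 0) {x : ℝ} (hx : 0 < x) : h x = 0 := by
  obtain ⟨n, hn⟩ := exists_nat_gt (x₀ / x)
  rw [div_lt_iff₀ hx] at hn
  have hsplit := hmul x₀ hx₀ ((n + 1) * x - x₀) (by nlinarith)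
  rw [add_sub_cancel, h0, zero_mul, map_nat_succ_mul_of_map_add_eq_mul hmul n hx] at hsplit
  exact pow_eq_zero_iff (Nat.succ_ne_zero n) |>.mp hsplit

theorem exists_eq_rpow_of_map_add_eq_mul (hmul : ∀ x > 0, ∀ y > 0, h (x + y) = h x * h y)
    (hle : ∀ x > 0, h x ≤ 1) : ∃ a : ℝ, 0 ≤ a ∧ a ≤ 1 ∧ ∀ x > 0, h x = a ^ x := by
  have hnn : ∀ x > 0, 0 ≤ h x := fun x hx => by
    simpa [← hmul (x / 2) (by positivity) (x / 2) (by positivity)] using mul_self_nonneg (h (x / 2))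
  by_cases hzero : ∃ x₀ > 0, h x₀ = 0
  · obtain ⟨x₀, hx₀, h0⟩ := hzero
    refine ⟨0, le_rfl, zero_le_one, fun x hx => ?_⟩
    rw [eq_zero_of_map_add_eq_mul_of_eq_zero hmul hx₀ h0 hx, Real.zero_rpow hx.ne']
  push Not at hzero
  have hpos : ∀ x > 0, 0 < h x := fun x hx => (hnn x hx).lt_of_ne' (hzero x hx)
  have hlog : ∀ x > 0, Real.log (h x) = x * Real.log (h 1) :=
    fun x hx => eq_mul_of_map_add_of_nonpos (f := fun x => Real.log (h x))
      (fun x hx y hy => by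
        simp only [hmul x hx y hy, Real.log_mul (hpos x hx).ne' (hpos y hy).ne'])
      (fun x hx => Real.log_nonpos (hnn x hx) (hle x hx)) hx
  refine ⟨h 1, hnn 1 one_pos, hle 1 one_pos, fun x hx => ?_⟩
  rw [Real.rpow_def_of_pos (hpos 1 one_pos), mul_comm, ← hlog x hx, Real.exp_log (hpos x hx)]

end PositiveHalfLine

theorem MeasureTheory.Integrable.not_eventually_pos_and_mul_le_comp_add {φ : ℝ → ℝ}
    (hφ : Integrable φ) (hφ0 : 0 ≤ φ) {α r : ℝ} (hα : 0 < α) (hr : 1 < r) :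
    ¬ ∀ᶠ x in atTop, 0 < φ x ∧ r * φ x ≤ φ (x + α) := by
  intro hev
  obtain ⟨Y, hY⟩ := eventually_atTop.mp hev
  set I : ℝ → ℝ := fun x => ∫ t in x..x + α, φ t
  have hI_le (x : ℝ) : I x ≤ ∫ t, φ t := by
    simp only [I, intervalIntegral.integral_of_le (le_add_of_nonneg_right hα.le)]
    exact setIntegral_le_integral hφ (Eventually.of_forall hφ0)
  have hI_pos : 0 < I Y :=
    intervalIntegral.intervalIntegral_pos_of_pos_on hφ.intervalIntegrable
      (fun x hx => (hY x hx.1.le).1) (lt_add_of_pos_right Y hα)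
  have hI_grow {x : ℝ} (hx : Y ≤ x) : r * I x ≤ I (x + α) := by
    simp only [I, ← intervalIntegral.integral_const_mul, ← intervalIntegral.integral_comp_add_right]
    refine intervalIntegral.integral_mono_on (le_add_of_nonneg_right hα.le)
      (hφ.const_mul r).intervalIntegrable (hφ.comp_add_right α).intervalIntegrable
      fun t ht => (hY t (hx.trans ht.1)).2
  have hI_geom (n : ℕ) : r ^ n * I Y ≤ I (Y + n * α) := by
    induction n with
    | zero => simp
    | succ n ih =>
      calc r ^ (n + 1) * I Y = r * (r ^ n * I Y) := by ring
        _ ≤ r * I (Y + n * α) := by gcongr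
        _ ≤ I (Y + n * α + α) := hI_grow (by nlinarith)
        _ = I (Y + (n + 1 : ℕ) * α) := by push_cast; ring_nf
  obtain ⟨n, hn⟩ := ((tendsto_pow_atTop_atTop_of_one_lt hr).atTop_mul_const hI_pos)
    |>.eventually_gt_atTop (∫ t, φ t) |>.exists
  linarith [hI_geom n, hI_le (Y + n * α)]

section RatioLimit

variable {K : Type*} [NormedField K] {g : ℝ → K}

theorem norm_le_one_of_tendsto_div_comp_add (hg : MemLp g 2 volume) {α : ℝ} (hα : 0 < α) {L : K}
    (hL : Tendsto (fun x => g (x + α) / g x) atTop (nhds L)) : ‖L‖ ≤ 1 := by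
  by_contra! hL1
  obtain ⟨r, hr1, hrL⟩ := exists_between (one_lt_pow₀ hL1 two_ne_zero)
  refine (hg.integrable_norm_pow two_ne_zero).not_eventually_pos_and_mul_le_comp_add
    (fun x => by positivity) hα hr1 ?_
  filter_upwards [(hL.norm.pow 2).eventually_const_lt hrL] with x hx
  rw [norm_div, div_pow] at hx
  have hgx : 0 < ‖g x‖ ^ 2 := by
    by_contra! h0
    rw [le_antisymm h0 (by positivity), div_zero] at hx
    linarith
  exact ⟨hgx, ((lt_div_iff₀ hgx).mp hx).le⟩

theorem eq_zero_of_tendsto_div_comp_add_of_frequently_eq_zero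
    (hz : ∃ᶠ x in atTop, g x = 0) {α : ℝ} {L : K}
    (hL : Tendsto (fun x => g (x + α) / g x) atTop (nhds L)) : L = 0 := by
  have hfreq : ∃ᶠ x in atTop, g (x + α) / g x ∈ ({0} : Set K) :=
    hz.mono fun x hx => by simp [hx]
  simpa using mem_closure_of_frequently_of_tendsto hfreq hL

theorem tendsto_div_comp_add_add_of_eventually_ne_zero (hne : ∀ᶠ x in atTop, g x ≠ 0)
    {α β : ℝ} {L M : K} (hL : Tendsto (fun x => g (x + α) / g x) atTop (nhds L))
    (hM : Tendsto (fun x => g (x + β) / g x) atTop (nhds M)) :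
    Tendsto (fun x => g (x + (α + β)) / g x) atTop (nhds (M * L)) := by
  have hM' := hM.comp (tendsto_atTop_add_const_right atTop α tendsto_id)
  refine (hM'.mul hL).congr' ?_
  filter_upwards [hne, tendsto_atTop_add_const_right atTop α tendsto_id |>.eventually hne]
    with x hx hxα
  simp only [Function.comp_apply, id] at hxα ⊢
  rw [← add_assoc]
  field_simp

theorem norm_add_eq_mul_of_tendsto_div_comp_add {l : ℝ → K}
    (hl : ∀ α > 0, Tendsto (fun x => g (x + α) / g x) atTop (nhds (l α)))
    {α β : ℝ} (hα : 0 < α) (hβ : 0 < β) : ‖l (α + β)‖ = ‖l α‖ * ‖l β‖ := by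
  by_cases hz : ∃ᶠ x in atTop, g x = 0
  · rw [eq_zero_of_tendsto_div_comp_add_of_frequently_eq_zero hz (hl α hα),
      eq_zero_of_tendsto_div_comp_add_of_frequently_eq_zero hz (hl _ (add_pos hα hβ)),
      norm_zero, zero_mul]
  · rw [not_frequently] at hz
    rw [tendsto_nhds_unique (hl (α + β) (add_pos hα hβ))
      (tendsto_div_comp_add_add_of_eventually_ne_zero hz (hl α hα) (hl β hβ)), norm_mul, mul_comm]

end RatioLimit

theorem ratio_limit_norm_exponential (g : ℝ → ℂ) (hg : MemLp g 2 volume)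
    (l : ℝ → ℂ)
    (hl : ∀ α > 0, Tendsto (fun x => g (x + α) / g x) atTop (nhds (l α))) :
    ∃ a : ℝ, 0 ≤ a ∧ a ≤ 1 ∧ ∀ α > 0, ‖l α‖ = a ^ α :=
  exists_eq_rpow_of_map_add_eq_mul
    (fun _ hα _ hβ => norm_add_eq_mul_of_tendsto_div_comp_add hl hα hβ)
    fun α hα => norm_le_one_of_tendsto_div_comp_add hg hα (hl α hα)
end

section
/- Let g : ℝ → ℂ be a function that is eventually differentiable and nonvanishing (on some half-line (A, ∞)), and suppose the logarithmic derivative g'(x)/g(x) tends to a finite limit l ∈ ℂ as x → ∞. Then for every α > 0, g(x+α)/g(x) → e^{lα} as x → ∞. -/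
/-! For large `x`, `ψ t = g t * exp (-l t)` satisfies `‖ψ' t‖ ≤ ε ‖ψ t‖` on `[x, x + α]`, since
`ψ' / ψ = g' / g - l`. Gronwall's inequality applied to `ψ - ψ x` then bounds
`‖ψ (x + α) / ψ x - 1‖ = ‖g (x + α) / g x * exp (-l α) - 1‖` by `exp (ε α) - 1`, which tends to `0`
with `ε`. -/

open Filter Set Topology

theorem norm_sub_le_of_norm_deriv_right_le_mul_norm {E : Type*} [NormedAddCommGroup E]
    [NormedSpace ℝ E] {f f' : ℝ → E} {K a b : ℝ} (hK : 0 ≤ K) (hf : ContinuousOn f (Icc a b))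
    (hf' : ∀ x ∈ Ico a b, HasDerivWithinAt f (f' x) (Ici x) x)
    (bound : ∀ x ∈ Ico a b, ‖f' x‖ ≤ K * ‖f x‖) :
    ∀ x ∈ Icc a b, ‖f x - f a‖ ≤ ‖f a‖ * (Real.exp (K * (x - a)) - 1) := by
  intro x hx
  have := norm_le_gronwallBound_of_norm_deriv_right_le (f := fun t => f t - f a) (δ := 0)
    (ε := K * ‖f a‖) (hf.sub continuousOn_const)
    (fun t ht => (hf' t ht).sub_const (f a)) (by simp) (fun t ht => by
      calc ‖f' t‖ ≤ K * ‖f t‖ := bound t ht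
        _ ≤ K * ‖f t - f a‖ + K * ‖f a‖ := by
          rw [← mul_add]; exact mul_le_mul_of_nonneg_left (norm_le_norm_sub_add _ _) hK) x hx
  rcases hK.eq_or_lt with rfl | hK
  · simpa [gronwallBound_K0] using this
  · rw [gronwallBound_of_K_ne_0 hK.ne'] at this
    simpa [mul_div_cancel_left₀ _ hK.ne'] using this

theorem hasDerivAt_mul_cexp_neg_mul {g : ℝ → ℂ} {g' l : ℂ} {t : ℝ} (hg : HasDerivAt g g' t) :
    HasDerivAt (fun s : ℝ => g s * Complex.exp (-(l * s)))
      ((g' - l * g t) * Complex.exp (-(l * t))) t := by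
  have hexp : HasDerivAt (fun s : ℝ => Complex.exp (-(l * s)))
      (Complex.exp (-(l * t)) * -l) t := by
    simpa using ((hasDerivAt_id (t : ℂ)).const_mul l).neg.cexp.comp_ofReal
  exact (hg.mul hexp).congr_deriv (by ring)

theorem norm_div_mul_cexp_sub_one_le {g g' : ℝ → ℂ} {l : ℂ} {ε a b : ℝ} (hab : a ≤ b)
    (hg : ∀ t ∈ Icc a b, HasDerivAt g (g' t) t) (hg₀ : ∀ t ∈ Icc a b, g t ≠ 0)
    (hlog : ∀ t ∈ Icc a b, ‖g' t / g t - l‖ ≤ ε) :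
    ‖g b / g a * Complex.exp (-(l * (b - a))) - 1‖ ≤ Real.exp (ε * (b - a)) - 1 := by
  set ψ : ℝ → ℂ := fun s => g s * Complex.exp (-(l * s))
  have hψ : ∀ t ∈ Icc a b, HasDerivAt ψ ((g' t / g t - l) * ψ t) t := by
    intro t ht
    convert hasDerivAt_mul_cexp_neg_mul (l := l) (hg t ht) using 1
    simp only [ψ]
    field_simp [hg₀ t ht]
  have hψa : ψ a ≠ 0 := mul_ne_zero (hg₀ a ⟨le_rfl, hab⟩) (Complex.exp_ne_zero _)
  have hbound := norm_sub_le_of_norm_deriv_right_le_mul_norm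
    ((norm_nonneg _).trans (hlog a ⟨le_rfl, hab⟩))
    (fun t ht => (hψ t ht).continuousAt.continuousWithinAt)
    (fun t ht => (hψ t (Ico_subset_Icc_self ht)).hasDerivWithinAt)
    (fun t ht => by
      rw [norm_mul]
      exact mul_le_mul_of_nonneg_right (hlog t (Ico_subset_Icc_self ht)) (norm_nonneg _))
    b ⟨hab, le_rfl⟩
  have hratio : g b / g a * Complex.exp (-(l * (b - a))) - 1 = (ψ b - ψ a) / ψ a := by
    simp only [ψ]
    rw [show -(l * ((b : ℂ) - a)) = -(l * b) - -(l * a) by ring, Complex.exp_sub]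
    field_simp [hg₀ a ⟨le_rfl, hab⟩]
  rw [hratio, norm_div, div_le_iff₀ (norm_pos_iff.2 hψa), mul_comm]
  exact hbound

theorem ratio_limit_of_log_derivative_limit (g g' : ℝ → ℂ) (A : ℝ)
    (hdiff : ∀ x > A, HasDerivAt g (g' x) x)
    (hne : ∀ x > A, g x ≠ 0)
    (l : ℂ)
    (hl : Tendsto (fun x => g' x / g x) atTop (nhds l)) :
    ∀ α > 0,
      Tendsto (fun x => g (x + α) / g x) atTop (nhds (Complex.exp (l * α))) := by
  intro α hα
  suffices Tendsto (fun x => g (x + α) / g x * Complex.exp (-(l * α))) atTop (𝓝 1) by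
    simpa [mul_assoc, ← Complex.exp_add] using this.mul_const (Complex.exp (l * α))
  rw [Metric.tendsto_nhds]
  intro δ hδ
  have hexp : Tendsto (fun ε : ℝ => Real.exp (ε * α) - 1) (𝓝[>] 0) (𝓝 0) :=
    (((continuous_id.mul continuous_const).rexp.sub continuous_const).tendsto' 0 0
      (by simp)).mono_left nhdsWithin_le_nhds
  obtain ⟨ε, hεδ, hε⟩ := ((hexp.eventually (gt_mem_nhds hδ)).and self_mem_nhdsWithin).exists
  obtain ⟨B, hB⟩ := eventually_atTop.1
    ((hl.eventually (Metric.closedBall_mem_nhds l hε)).and (eventually_gt_atTop A))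
  filter_upwards [eventually_ge_atTop B] with x hx
  have hmem : ∀ t ∈ Icc x (x + α), dist (g' t / g t) l ≤ ε ∧ A < t :=
    fun t ht => hB t (hx.trans ht.1)
  rw [dist_eq_norm]
  refine lt_of_le_of_lt ?_ hεδ
  simpa using norm_div_mul_cexp_sub_one_le (by linarith) (fun t ht => hdiff t (hmem t ht).2)
    (fun t ht => hne t (hmem t ht).2) (fun t ht => by simpa [dist_eq_norm] using (hmem t ht).1)
end

section
/- Let g : ℝ → ℝ be a function that is eventually differentiable and eventually positive, and suppose the logarithmic derivative g'(x)/g(x) tends to −∞ as x → ∞. Then for every α > 0, g(x+α)/g(x) → 0 as x → ∞. -/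
/-! By the mean value theorem, `log g (x + α) - log g x = α · g'(c)/g(c)` for some `c ∈ (x, x + α)`,
so this difference tends to `-∞`; exponentiating gives `g (x + α) / g x → 0`. -/

open Filter

theorem tendsto_add_sub_atBot_of_hasDerivAt {f f' : ℝ → ℝ}
    (hf : ∀ᶠ x in atTop, HasDerivAt f (f' x) x) (hf' : Tendsto f' atTop atBot)
    {α : ℝ} (hα : 0 < α) :
    Tendsto (fun x => f (x + α) - f x) atTop atBot := by
  rw [tendsto_atBot]
  intro b
  obtain ⟨B, hB⟩ := eventually_atTop.1 (hf.and (tendsto_atBot.1 hf' (b / α)))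
  filter_upwards [eventually_ge_atTop B] with x hx
  obtain ⟨c, ⟨hxc, -⟩, hc⟩ := exists_hasDerivAt_eq_slope f f' (by linarith : x < x + α)
    (fun y hy => (hB y (hx.trans hy.1)).1.continuousAt.continuousWithinAt)
    (fun y hy => (hB y (by linarith [hy.1])).1)
  have hmvt : f (x + α) - f x = α * f' c := by
    rw [hc, add_sub_cancel_left]
    field_simp
  calc f (x + α) - f x = α * f' c := hmvt
    _ ≤ α * (b / α) := mul_le_mul_of_nonneg_left (hB c (by linarith)).2 hα.le
    _ = b := mul_div_cancel₀ b hα.ne'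

theorem ratio_limit_zero_of_log_derivative_atBot (g g' : ℝ → ℝ) (A : ℝ)
    (hdiff : ∀ x > A, HasDerivAt g (g' x) x)
    (hpos : ∀ x > A, 0 < g x)
    (hl : Tendsto (fun x => g' x / g x) atTop atBot) :
    ∀ α > 0, Tendsto (fun x => g (x + α) / g x) atTop (nhds 0) := by
  intro α hα
  have hlog : ∀ᶠ x in atTop, HasDerivAt (fun x => Real.log (g x)) (g' x / g x) x :=
    (eventually_gt_atTop A).mono fun x hx => (hdiff x hx).log (hpos x hx).ne'
  refine (Real.tendsto_exp_atBot.comp (tendsto_add_sub_atBot_of_hasDerivAt hlog hl hα)).congr' ?_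
  filter_upwards [eventually_gt_atTop A] with x hx
  simp only [Function.comp_apply, Real.exp_sub, Real.exp_log (hpos x hx),
    Real.exp_log (hpos (x + α) (by linarith))]
end

section
/- Let g : ℝ → ℂ be measurable with e^{tx} g(x) ∈ L¹(ℝ) for all t > 0, and suppose g is not zero almost everywhere. Let α₁, …, α_N > 0, c₁, …, c_N ∈ ℂ, and β₁, …, β_N ∈ ℝ. Then it is impossible that g(x) = ∑_{k=1}^N c_k e^{2πi β_k x} g(x + α_k) for almost every x ∈ ℝ. -/
/-!
Weight the relation by `e^{tx}`: taking norms, `w(x) = e^{tx} ‖g x‖` satisfies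
`w(x) ≤ ∑ ‖c_k‖ e^{-t α_k} w(x + α_k)` almost everywhere. Integrating and using translation
invariance of Lebesgue measure gives `‖w‖₁ ≤ (∑ ‖c_k‖ e^{-t α_k}) ‖w‖₁`, and for `t` large the
factor is `< 1` because every `α_k > 0`. Hence `w = 0` a.e., and so `g = 0` a.e.
-/

open MeasureTheory Real

open Filter in
theorem eventually_sum_mul_exp_neg_mul_lt_one {ι : Type*} (s : Finset ι) (a α : ι → ℝ)
    (hα : ∀ k ∈ s, 0 < α k) : ∀ᶠ t in atTop, ∑ k ∈ s, a k * exp (-(t * α k)) < 1 := by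
  have hlim : Tendsto (fun t => ∑ k ∈ s, a k * exp (-(t * α k))) atTop (nhds 0) := by
    simpa using tendsto_finsetSum s fun k hk =>
      (tendsto_exp_neg_atTop_nhds_zero.comp (tendsto_id.atTop_mul_const (hα k hk))).const_mul (a k)
  exact hlim.eventually_lt_const one_pos

theorem integral_le_sum_mul_integral_of_ae_le_sum_shift {G ι : Type*} [MeasurableSpace G]
    [AddGroup G] [MeasurableAdd G] {μ : Measure G} [μ.IsAddRightInvariant] (s : Finset ι)
    (a : ι → ℝ) (v : ι → G) {f : G → ℝ} (hf : Integrable f μ)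
    (h : ∀ᵐ x ∂μ, f x ≤ ∑ k ∈ s, a k * f (x + v k)) :
    ∫ x, f x ∂μ ≤ (∑ k ∈ s, a k) * ∫ x, f x ∂μ := by
  have hshift : ∀ k ∈ s, Integrable (fun x => a k * f (x + v k)) μ :=
    fun k _ => (hf.comp_add_right (v k)).const_mul (a k)
  calc ∫ x, f x ∂μ ≤ ∫ x, ∑ k ∈ s, a k * f (x + v k) ∂μ :=
        integral_mono_ae hf (integrable_finsetSum s hshift) h
    _ = (∑ k ∈ s, a k) * ∫ x, f x ∂μ := by
        simp only [integral_finsetSum s hshift, integral_const_mul, integral_add_right_eq_self,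
          Finset.sum_mul]

theorem ae_eq_zero_of_ae_le_sum_shift {G ι : Type*} [MeasurableSpace G]
    [AddGroup G] [MeasurableAdd G] {μ : Measure G} [μ.IsAddRightInvariant] (s : Finset ι)
    (a : ι → ℝ) (v : ι → G) (ha : ∑ k ∈ s, a k < 1) {f : G → ℝ} (hf_nonneg : 0 ≤ f)
    (hf : Integrable f μ) (h : ∀ᵐ x ∂μ, f x ≤ ∑ k ∈ s, a k * f (x + v k)) : f =ᵐ[μ] 0 := by
  have hle := integral_le_sum_mul_integral_of_ae_le_sum_shift s a v hf h
  have hpos : 0 ≤ ∫ x, f x ∂μ := integral_nonneg hf_nonneg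
  exact (integral_eq_zero_iff_of_nonneg hf_nonneg hf).1 (by nlinarith)

theorem norm_exp_two_pi_I_mul (β x : ℝ) : ‖Complex.exp (2 * π * Complex.I * β * x)‖ = 1 := by
  simpa [mul_comm, mul_left_comm, mul_assoc] using Complex.norm_exp_ofReal_mul_I (2 * π * β * x)

theorem norm_le_sum_of_eq_sum_modulated_shifts {N : ℕ} (g : ℝ → ℂ) (c : Fin N → ℂ) (α β : Fin N → ℝ)
    (x : ℝ) (hx : g x = ∑ k, c k * Complex.exp (2 * π * Complex.I * (β k) * x) * g (x + α k)) :
    ‖g x‖ ≤ ∑ k, ‖c k‖ * ‖g (x + α k)‖ := by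
  rw [hx]
  refine (norm_sum_le _ _).trans_eq (Finset.sum_congr rfl fun k _ => ?_)
  rw [norm_mul, norm_mul, norm_exp_two_pi_I_mul, mul_one]

theorem hrt_exponential_decay_first_shift_general (g : ℝ → ℂ)
    (hint : ∀ t > 0, Integrable (fun x => (Real.exp (t * x) : ℂ) * g x) volume)
    (hgne : ¬ g =ᵐ[volume] 0)
    (N : ℕ) (α : Fin N → ℝ) (hα : ∀ k, 0 < α k)
    (c : Fin N → ℂ) (β : Fin N → ℝ) :
    ¬ (∀ᵐ x ∂volume,
        g x = ∑ k, c k * Complex.exp (2 * π * Complex.I * (β k) * x) *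
          g (x + α k)) := by
  intro heq
  obtain ⟨t, hq, ht⟩ := ((eventually_sum_mul_exp_neg_mul_lt_one Finset.univ (fun k => ‖c k‖) α
    fun k _ => hα k).and (Filter.eventually_gt_atTop 0)).exists
  set w : ℝ → ℝ := fun x => exp (t * x) * ‖g x‖
  have hw_int : Integrable w := by
    simpa only [norm_mul, Complex.norm_real, norm_of_nonneg (exp_pos _).le] using (hint t ht).norm
  have hw_shift : ∀ᵐ x, w x ≤ ∑ k, ‖c k‖ * exp (-(t * α k)) * w (x + α k) := by
    filter_upwards [heq] with x hx
    calc w x ≤ exp (t * x) * ∑ k, ‖c k‖ * ‖g (x + α k)‖ :=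
          mul_le_mul_of_nonneg_left (norm_le_sum_of_eq_sum_modulated_shifts g c α β x hx)
            (exp_pos _).le
      _ = ∑ k, ‖c k‖ * exp (-(t * α k)) * w (x + α k) := by
          simp only [w, Finset.mul_sum, mul_add, exp_add, exp_neg]
          refine Finset.sum_congr rfl fun k _ => ?_
          field_simp
  have hw_zero := ae_eq_zero_of_ae_le_sum_shift Finset.univ _ α hq
    (fun x => by positivity) hw_int hw_shift
  apply hgne
  filter_upwards [hw_zero] with x hx
  simpa [w, (exp_pos _).ne'] using hx

theorem hrt_exponential_decay_first_shift (g : ℝ → ℂ) (hg : Measurable g)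
    (hint : ∀ t > 0, Integrable (fun x => (Real.exp (t * x) : ℂ) * g x) volume)
    (hgne : ¬ g =ᵐ[volume] 0)
    (N : ℕ) (hN : 0 < N) (α : Fin N → ℝ) (hα : ∀ k, 0 < α k)
    (c : Fin N → ℂ) (β : Fin N → ℝ) :
    ¬ (∀ᵐ x ∂volume,
        g x = ∑ k, c k * Complex.exp (2 * π * Complex.I * (β k) * x) *
          g (x + α k)) :=
  hrt_exponential_decay_first_shift_general g hint hgne N α hα c β
end

section
/- Let {β₁, …, β_N} ⊆ ℝ be linearly independent over ℚ and let θ₁, …, θ_N ∈ ℝ. For every U > 0 and ε > 0 there exist integers p₁, …, p_N and a real u > U such that |β_k u − p_k − θ_k| < ε for every k = 1, …, N; consequently |e^{2πi β_k u} − e^{2πi θ_k}| < 4πε for every k. -/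
/-!
Bohr's averaging argument. The nonnegative function
`F u = ∏ k, cos (π (β k u - θ k)) ^ (2 n)` is a trigonometric polynomial whose frequencies
`∑ k, (p k - n) β k` (with `0 ≤ p k ≤ 2 n`) vanish only for `p = n`, by linear independence;
so its mean over `[0, T]` tends to its constant term `(C(2n, n) / 4 ^ n) ^ N ≥ (2 n) ^ (-N)`.
If every `u > U` had some `β k u - θ k` at distance at least `ε` from `ℤ`, then
`F u ≤ cos (π ε) ^ (2 n)` for `u > U`, so the mean would tend to at most `cos (π ε) ^ (2 n)`,
which is smaller than `(2 n) ^ (-N)` once `n` is large.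
-/

open Real Finset Filter Topology

lemma ofReal_cos_pi_mul_pow_two_mul (n : ℕ) (t : ℝ) :
    ((cos (π * t) : ℝ) : ℂ) ^ (2 * n) =
      ∑ j ∈ range (2 * n + 1),
        ((2 * n).choose j : ℂ) / 4 ^ n * Complex.exp (2 * π * Complex.I * ((j : ℝ) - n) * t) := by
  rw [Complex.ofReal_cos, Complex.cos, div_pow, add_pow, sum_div]
  refine sum_congr rfl fun j hj => ?_
  have hj : j ≤ 2 * n := Nat.lt_succ_iff.mp (mem_range.mp hj)
  rw [← Complex.exp_nat_mul, ← Complex.exp_nat_mul, ← Complex.exp_add,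
    show (2 : ℂ) ^ (2 * n) = 4 ^ n by rw [pow_mul]; norm_num]
  push_cast [Nat.cast_sub hj]
  ring_nf

lemma ofReal_prod_cos_pow_eq_sum {ι : Type*} [Fintype ι] [DecidableEq ι] (n : ℕ)
    (β θ : ι → ℝ) (u : ℝ) :
    ((∏ k, cos (π * (β k * u - θ k)) ^ (2 * n) : ℝ) : ℂ) =
      ∑ p ∈ Fintype.piFinset fun _ => range (2 * n + 1),
        (∏ k, ((2 * n).choose (p k) : ℂ) / 4 ^ n) *
          Complex.exp (-(2 * π * Complex.I) * ((∑ k, ((p k : ℝ) - n) * θ k : ℝ) : ℂ)) *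
          Complex.exp (2 * π * Complex.I * ((∑ k, ((p k : ℝ) - n) * β k : ℝ) : ℂ) * u) := by
  simp only [Complex.ofReal_prod, Complex.ofReal_pow, ofReal_cos_pi_mul_pow_two_mul]
  rw [prod_univ_sum]
  refine sum_congr rfl fun p _ => ?_
  rw [prod_mul_distrib, ← Complex.exp_sum]
  conv_rhs => rw [mul_assoc, ← Complex.exp_add]
  congr 2
  push_cast
  rw [mul_sum, mul_sum, sum_mul, ← sum_add_distrib]
  exact sum_congr rfl fun k _ => by ring

lemma tendsto_average_exp (a : ℝ) :
    Tendsto (fun T : ℝ => (∫ u in (0 : ℝ)..T, Complex.exp (2 * π * Complex.I * a * u)) / T)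
      atTop (𝓝 (if a = 0 then 1 else 0)) := by
  by_cases ha : a = 0
  · simp only [ha, if_true, Complex.ofReal_zero, mul_zero, zero_mul, Complex.exp_zero,
      intervalIntegral.integral_const, sub_zero, Complex.real_smul, mul_one]
    refine tendsto_const_nhds.congr' ?_
    filter_upwards [eventually_ne_atTop 0] with T hT
    rw [div_self (Complex.ofReal_ne_zero.mpr hT)]
  · set c : ℂ := 2 * π * Complex.I * a
    have hc : c ≠ 0 := by simp [c, pi_ne_zero, ha]
    rw [if_neg ha]
    simp_rw [integral_exp_mul_complex hc, Complex.ofReal_zero, mul_zero, Complex.exp_zero]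
    -- the primitive `(exp (c T) - 1) / c` stays bounded
    refine squeeze_zero_norm (a := fun T : ℝ => 2 / ‖c‖ * |T|⁻¹) (fun T => ?_) ?_
    · rw [norm_div, norm_div, Complex.norm_real, Real.norm_eq_abs, div_eq_mul_inv]
      gcongr
      calc ‖Complex.exp (c * T) - 1‖ ≤ ‖Complex.exp (c * T)‖ + ‖(1 : ℂ)‖ := norm_sub_le _ _
        _ = 2 := by
          rw [Complex.norm_exp]
          simp [c]
          norm_num
    · simpa using (tendsto_inv_atTop_zero.comp tendsto_abs_atTop_atTop).const_mul (2 / ‖c‖)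

lemma tendsto_average_sum_exp {ι : Type*} (s : Finset ι) (c : ι → ℂ) (a : ι → ℝ) :
    Tendsto (fun T : ℝ =>
        (∫ u in (0 : ℝ)..T, ∑ i ∈ s, c i * Complex.exp (2 * π * Complex.I * a i * u)) / T)
      atTop (𝓝 (∑ i ∈ s with a i = 0, c i)) := by
  have hint : ∀ i ∈ s, ∀ T : ℝ, IntervalIntegrable
      (fun u : ℝ => c i * Complex.exp (2 * π * Complex.I * a i * u)) MeasureTheory.volume 0 T :=
    fun i _ T => by apply Continuous.intervalIntegrable; fun_prop
  simp_rw [intervalIntegral.integral_finsetSum fun i hi => hint i hi _,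
    intervalIntegral.integral_const_mul, sum_div, mul_div_assoc]
  simpa only [mul_ite, mul_one, mul_zero, ← sum_filter] using
    tendsto_finsetSum s fun i _ => (tendsto_average_exp (a i)).const_mul (c i)

lemma LinearIndependent.eq_of_sum_ratCast_sub_mul_eq_zero {ι : Type*} [Fintype ι] {β : ι → ℝ}
    (hβ : LinearIndependent ℚ β) {a b : ι → ℚ} (h : ∑ k, ((a k : ℝ) - b k) * β k = 0) :
    a = b := by
  have := Fintype.linearIndependent_iff.mp hβ (a - b) (by simpa [Rat.smul_def] using h)
  exact funext fun k => sub_eq_zero.mp (this k)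

lemma tendsto_average_prod_cos_pow {ι : Type*} [Fintype ι] {β : ι → ℝ}
    (hβ : LinearIndependent ℚ β) (θ : ι → ℝ) (n : ℕ) :
    Tendsto (fun T : ℝ => (∫ u in (0 : ℝ)..T, ∏ k, cos (π * (β k * u - θ k)) ^ (2 * n)) / T)
      atTop (𝓝 ((n.centralBinom / 4 ^ n : ℝ) ^ Fintype.card ι)) := by
  classical
  rw [← tendsto_ofReal_iff]
  simp_rw [Complex.ofReal_div, ← intervalIntegral.integral_ofReal, ofReal_prod_cos_pow_eq_sum]
  convert tendsto_average_sum_exp _ _ _ using 2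
  -- only the constant index `p = n` has frequency zero
  have hzero : ∀ p : ι → ℕ, ∑ k, ((p k : ℝ) - n) * β k = 0 ↔ p = fun _ => n := by
    refine fun p => ⟨fun h => ?_, fun h => by simp [h]⟩
    have := hβ.eq_of_sum_ratCast_sub_mul_eq_zero (a := fun k => p k) (b := fun _ => n)
      (by simpa using h)
    funext k
    exact_mod_cast congrFun this k
  rw [filter_congr fun p _ => hzero p, filter_eq' _ _,
    if_pos (by simp [Fintype.mem_piFinset]; omega)]
  simp [Nat.centralBinom, prod_const, div_pow]

lemma cos_sq_pi_mul_le_of_le_abs_sub_round {ε t : ℝ} (hε : 0 ≤ ε)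
    (h : ε ≤ |t - round t|) : cos (π * t) ^ 2 ≤ cos (π * ε) ^ 2 := by
  have hcos : cos (2 * (π * t)) = cos (2 * π * |t - round t|) := by
    rw [← cos_sub_int_mul_two_pi _ (round t), ← cos_abs, ← abs_of_pos two_pi_pos, ← abs_mul,
      abs_of_pos two_pi_pos]
    ring_nf
  rw [cos_sq, cos_sq, hcos]
  gcongr 1 / 2 + ?_ / 2
  rw [← mul_assoc]
  apply cos_le_cos_of_nonneg_of_le_pi (by positivity) _ (by gcongr)
  nlinarith [abs_sub_round t, pi_pos]

lemma exists_pow_lt_centralBinom_div_four_pow_pow {ρ : ℝ} (hρ : 0 ≤ ρ) (hρ' : ρ < 1) (N : ℕ) :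
    ∃ n : ℕ, ρ ^ n < (n.centralBinom / 4 ^ n : ℝ) ^ N := by
  have hlim : Tendsto (fun n : ℕ => (2 : ℝ) ^ N * ((n : ℝ) ^ N * ρ ^ n)) atTop (𝓝 0) := by
    simpa using (tendsto_pow_const_mul_const_pow_of_lt_one N hρ hρ').const_mul ((2 : ℝ) ^ N)
  obtain ⟨n, hn, hn1⟩ :=
    ((hlim.eventually (eventually_lt_nhds one_pos)).and (eventually_ge_atTop 1)).exists
  refine ⟨n, ?_⟩
  have hbinom : (1 / (2 * n) : ℝ) ≤ n.centralBinom / 4 ^ n := by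
    rw [div_le_div_iff₀ (by positivity) (by positivity), one_mul, mul_comm]
    exact_mod_cast Nat.four_pow_le_two_mul_self_mul_centralBinom n hn1
  calc ρ ^ n < (1 / (2 * n) : ℝ) ^ N := by
        rw [div_pow, one_pow, lt_div_iff₀ (by positivity)]
        linarith [show (2 * n : ℝ) ^ N * ρ ^ n = (2 : ℝ) ^ N * ((n : ℝ) ^ N * ρ ^ n) by ring]
    _ ≤ _ := by gcongr

lemma le_of_tendsto_average_of_eventually_le {f : ℝ → ℝ} (hf : Continuous f) {c L : ℝ}
    (hc : ∀ᶠ u in atTop, f u ≤ c)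
    (hL : Tendsto (fun T : ℝ => (∫ u in (0 : ℝ)..T, f u) / T) atTop (𝓝 L)) : L ≤ c := by
  obtain ⟨U, hU⟩ := eventually_atTop.mp hc
  have hlim : Tendsto (fun T : ℝ => ((∫ u in (0 : ℝ)..U, f u) - c * U) / T + c) atTop (𝓝 c) := by
    simpa using (tendsto_const_nhds.div_atTop tendsto_id).add_const c
  refine le_of_tendsto_of_tendsto hL hlim ?_
  filter_upwards [eventually_ge_atTop U, eventually_gt_atTop 0] with T hUT hT
  have htail : ∫ u in U..T, f u ≤ c * (T - U) := by
    simpa [mul_comm] using intervalIntegral.integral_mono_on (μ := MeasureTheory.volume) hUT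
      (hf.intervalIntegrable U T) intervalIntegrable_const fun u hu => hU u hu.1
  rw [← intervalIntegral.integral_add_adjacent_intervals (hf.intervalIntegrable 0 U)
    (hf.intervalIntegrable U T), div_add' _ _ _ hT.ne']
  exact div_le_div_of_nonneg_right (by linarith) hT.le

theorem exists_forall_abs_mul_sub_intCast_sub_lt {ι : Type*} [Fintype ι] {β : ι → ℝ}
    (hβ : LinearIndependent ℚ β) (θ : ι → ℝ) (U : ℝ) {ε : ℝ} (hε : 0 < ε) :
    ∃ (p : ι → ℤ) (u : ℝ), U < u ∧ ∀ k, |β k * u - p k - θ k| < ε := by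
  wlog hε' : ε ≤ 1 / 2 generalizing ε
  · obtain ⟨p, u, hu, hp⟩ := this (by norm_num : (0 : ℝ) < 1 / 2) le_rfl
    exact ⟨p, u, hu, fun k => (hp k).trans (by linarith)⟩
  have hρ : cos (π * ε) ^ 2 < 1 := by
    have : 0 < sin (π * ε) := sin_pos_of_pos_of_lt_pi (by positivity) (by nlinarith [pi_pos])
    rw [cos_sq']
    nlinarith
  obtain ⟨n, hn⟩ := exists_pow_lt_centralBinom_div_four_pow_pow (sq_nonneg _) hρ (Fintype.card ι)
  by_contra! hfar
  refine hn.not_ge <| le_of_tendsto_average_of_eventually_le (by fun_prop) ?_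
    (tendsto_average_prod_cos_pow hβ θ n)
  filter_upwards [eventually_gt_atTop U] with u hu
  obtain ⟨k, hk⟩ := hfar (fun k => round (β k * u - θ k)) u hu
  have hk' : ε ≤ |β k * u - θ k - round (β k * u - θ k)| := by
    rwa [sub_right_comm]
  calc ∏ j, cos (π * (β j * u - θ j)) ^ (2 * n)
      ≤ ∏ j ∈ {k}, cos (π * (β j * u - θ j)) ^ (2 * n) :=
        prod_le_prod_of_subset_of_le_one (subset_univ _)
          (fun j _ => (even_two_mul n).pow_nonneg _) fun j _ _ => by
            rw [pow_mul]; exact pow_le_one₀ (sq_nonneg _) (cos_sq_le_one _)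
    _ = (cos (π * (β k * u - θ k)) ^ 2) ^ n := by rw [prod_singleton, pow_mul]
    _ ≤ (cos (π * ε) ^ 2) ^ n :=
        pow_le_pow_left₀ (sq_nonneg _) (cos_sq_pi_mul_le_of_le_abs_sub_round hε.le hk') n

lemma norm_exp_two_pi_I_mul_sub_exp_le (x y : ℝ) (p : ℤ) :
    ‖Complex.exp (2 * π * Complex.I * x) - Complex.exp (2 * π * Complex.I * y)‖ ≤
      2 * π * |x - p - y| := by
  have hx : Complex.exp (2 * π * Complex.I * x) =
      Complex.exp (2 * π * Complex.I * y) * Complex.exp (Complex.I * ↑(2 * π * (x - p - y))) := by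
    rw [← mul_one (Complex.exp (2 * π * Complex.I * x)), ← Complex.exp_int_mul_two_pi_mul_I (-p),
      ← Complex.exp_add, ← Complex.exp_add]
    congr 1
    push_cast
    ring
  have hy : ‖Complex.exp (2 * π * Complex.I * y)‖ = 1 := by simp [Complex.norm_exp]
  rw [hx, ← mul_sub_one, norm_mul, hy, one_mul]
  simpa [abs_mul, abs_of_pos pi_pos, mul_assoc] using
    Real.norm_exp_I_mul_ofReal_sub_one_le (x := 2 * π * (x - p - y))

theorem kronecker_approximation (N : ℕ) (β : Fin N → ℝ)
    (hβ : LinearIndependent ℚ β) (θ : Fin N → ℝ) :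
    ∀ U > 0, ∀ ε > 0, ∃ (p : Fin N → ℤ) (u : ℝ), U < u ∧
      (∀ k, |β k * u - p k - θ k| < ε) ∧
      (∀ k, ‖Complex.exp (2 * π * Complex.I * (β k) * u) -
        Complex.exp (2 * π * Complex.I * (θ k))‖ < 4 * π * ε) := by
  intro U _ ε hε
  obtain ⟨p, u, hu, hp⟩ := exists_forall_abs_mul_sub_intCast_sub_lt hβ θ U hε
  refine ⟨p, u, hu, hp, fun k => ?_⟩
  calc _ ≤ 2 * π * |β k * u - p k - θ k| := by
        simpa [mul_assoc] using norm_exp_two_pi_I_mul_sub_exp_le (β k * u) (θ k) (p k)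
    _ < 4 * π * ε := by nlinarith [hp k, pi_pos]
end
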